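/- Suppose P is symmetric, row-stochastic, and for every integer k ≥ 0 the diagonal entries of P^k are all equal. Let X_t = (Φ*)^t(I−J), r_t = Tr(X_t)/N, and let v ∈ ℝ^N be an eigenvector of P with Pv = λv and Σ_i v_i = 0. Then for every t ≥ 0, v is an eigenvector of X_t, i.e. X_t v = μ_t v for scalars μ_t satisfying μ₀ = 1 and the recursion μ_{t+1} = λ_q² μ_t + q² r_t (1 − λ²), where λ_q = (1−q) + qλ. -/

import Mathlib

/-!
Every iterate `X_t = (Φ*)ᵗ(I − J)` has the form `p_t(P) − J` for a real polynomial `p_t`. Indeed,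
the diagonal of `p(P) − J` is constant (the diagonals of all powers of `P` are), equal to its
normalised trace `r`, so the correction term of `Φ*` reduces to `q² r (I − P²)`; and `J` is
absorbed by `P_q` on both sides because `P` is doubly stochastic. Hence
`p_{t+1} = (1 − q + qX)² p_t + q² r_t (1 − X²)`. Finally `J v = 0` since `∑ᵢ vᵢ = 0`, so
`X_t v = p_t(λ) v`, and evaluating the recursion at `λ` gives the one for `μ_t = p_t(λ)`.
-/

open Matrix BigOperators

/-- The map `Φ*(Y) = P_qᵀ Y P_q + q²(Ψ⁻(Pᵀ·Ψ(Y)) − Pᵀ Ψ⁻(Ψ(Y)) P)`,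
where `P_q = (1−q)I + qP`. -/
noncomputable def PhiStar {N : ℕ} (P : Matrix (Fin N) (Fin N) ℝ) (q : ℝ)
    (Y : Matrix (Fin N) (Fin N) ℝ) : Matrix (Fin N) (Fin N) ℝ :=
  ((1 - q) • (1 : Matrix (Fin N) (Fin N) ℝ) + q • P)ᵀ * Y *
      ((1 - q) • (1 : Matrix (Fin N) (Fin N) ℝ) + q • P)
    + q ^ 2 •
        (Matrix.diagonal (Pᵀ *ᵥ Matrix.diag Y)
          - Pᵀ * Matrix.diagonal (Matrix.diag Y) * P)

open Polynomial

theorem Polynomial.aeval_C_add_C_mul_X {R A : Type*} [CommSemiring R] [Semiring A] [Algebra R A]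
    (a b : R) (x : A) : aeval x (C a + C b * X) = a • 1 + b • x := by
  simp [Algebra.algebraMap_eq_smul_one]

namespace Matrix

variable {n R : Type*} [Fintype n]

theorem diag_aeval_eq_of_diag_pow_eq [DecidableEq n] [CommSemiring R] {P : Matrix n n R}
    (hP : ∀ k : ℕ, ∀ i j, (P ^ k) i i = (P ^ k) j j) (p : R[X]) (i j : n) :
    aeval P p i i = aeval P p j j := by
  simp only [aeval_eq_sum_range, sum_apply, smul_apply, hP _ i j]

theorem pow_mulVec_of_mulVec_eq_smul [DecidableEq n] [CommSemiring R] {P : Matrix n n R}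
    {v : n → R} {μ : R} (hv : P *ᵥ v = μ • v) (k : ℕ) : (P ^ k) *ᵥ v = μ ^ k • v := by
  induction k with
  | zero => simp
  | succ k ih => rw [pow_succ', ← mulVec_mulVec, ih, mulVec_smul, hv, smul_smul, pow_succ]

theorem aeval_mulVec_of_mulVec_eq_smul [DecidableEq n] [CommSemiring R] {P : Matrix n n R}
    {v : n → R} {μ : R} (hv : P *ᵥ v = μ • v) (p : R[X]) : aeval P p *ᵥ v = p.eval μ • v := by
  simp only [aeval_eq_sum_range, eval_eq_sum_range, sum_mulVec, smul_mulVec,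
    pow_mulVec_of_mulVec_eq_smul hv, smul_smul, Finset.sum_smul]

theorem diag_eq_trace_div_card [Field R] [CharZero R] {Y : Matrix n n R}
    (hY : ∀ i j, Y i i = Y j j) (i : n) : Y i i = Y.trace / Fintype.card n := by
  have : Nonempty n := ⟨i⟩
  rw [eq_div_iff (Nat.cast_ne_zero.mpr Fintype.card_ne_zero), trace]
  simp [hY _ i, mul_comm]

section Stochastic

variable [Semiring R] {P : Matrix n n R}

theorem mul_of_const_of_sum_row_eq_one (hP : ∀ i, ∑ j, P i j = 1) (a : R) :
    P * of (fun _ _ => a) = of (fun _ _ => a) := by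
  ext i j
  simp [mul_apply, ← Finset.sum_mul, hP i]

theorem of_const_mul_of_sum_col_eq_one (hP : ∀ j, ∑ i, P i j = 1) (a : R) :
    of (fun _ _ => a) * P = of (fun _ _ => a) := by
  ext i j
  simp [mul_apply, ← Finset.mul_sum, hP j]

theorem mulVec_const_of_sum_row_eq_one (hP : ∀ i, ∑ j, P i j = 1) (a : R) :
    P *ᵥ (fun _ => a) = fun _ => a := by
  ext i
  simp [mulVec, dotProduct, ← Finset.sum_mul, hP i]

end Stochastic

end Matrix

section PhiStar

variable {N : ℕ} {P : Matrix (Fin N) (Fin N) ℝ} (q : ℝ)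

theorem phiStar_of_diag_eq_const (hProw : ∀ i, ∑ j, P i j = 1) (hPsymm : Pᵀ = P)
    {Y : Matrix (Fin N) (Fin N) ℝ} {c : ℝ} (hY : ∀ i, Y i i = c) :
    PhiStar P q Y = aeval P (C (1 - q) + C q * X) * Y * aeval P (C (1 - q) + C q * X)
      + (q ^ 2 * c) • (1 - P ^ 2) := by
  have hdiag : diag Y = fun _ => c := funext hY
  have hconst : diagonal (fun _ : Fin N => c) = c • 1 := (smul_one_eq_diagonal c).symm
  rw [PhiStar, aeval_C_add_C_mul_X, hdiag, hPsymm, mulVec_const_of_sum_row_eq_one hProw, hconst,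
    transpose_add, transpose_smul, transpose_smul, transpose_one, hPsymm, Matrix.mul_smul,
    mul_one, smul_mul_assoc, ← smul_sub, smul_smul, sq P]

theorem phiStar_aeval_sub_const (hProw : ∀ i, ∑ j, P i j = 1) (hPsymm : Pᵀ = P)
    (p : ℝ[X]) {a c : ℝ}
    (hc : ∀ i, (aeval P p - of fun _ _ => a : Matrix (Fin N) (Fin N) ℝ) i i = c) :
    PhiStar P q (aeval P p - of fun _ _ => a)
      = aeval P ((C (1 - q) + C q * X) ^ 2 * p + C (q ^ 2 * c) * (1 - X ^ 2))
        - of fun _ _ => a := by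
  have hPcol : ∀ j, ∑ i, P i j = 1 := fun j =>
    calc ∑ i, P i j = ∑ i, Pᵀ j i := rfl
      _ = 1 := by rw [hPsymm, hProw]
  set J : Matrix (Fin N) (Fin N) ℝ := of fun _ _ => a
  set L : ℝ[X] := C (1 - q) + C q * X
  have hLJ : aeval P L * J = J := by
    rw [aeval_C_add_C_mul_X, add_mul, smul_mul_assoc, smul_mul_assoc, one_mul,
      mul_of_const_of_sum_row_eq_one hProw, ← add_smul, sub_add_cancel, one_smul]
  have hJL : J * aeval P L = J := by
    rw [aeval_C_add_C_mul_X, mul_add, Matrix.mul_smul, Matrix.mul_smul, mul_one,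
      of_const_mul_of_sum_col_eq_one hPcol, ← add_smul, sub_add_cancel, one_smul]
  rw [phiStar_of_diag_eq_const q hProw hPsymm hc, mul_sub, sub_mul, hLJ, hJL, ← map_mul,
    ← map_mul, sub_add_eq_add_sub, show L * p * L = L ^ 2 * p by ring, map_add (aeval P),
    map_mul (aeval P) (C _), aeval_C, Algebra.algebraMap_eq_smul_one, smul_one_mul]
  simp

end PhiStar

noncomputable def phiStarPoly {N : ℕ} (P : Matrix (Fin N) (Fin N) ℝ) (q : ℝ) : ℕ → ℝ[X]
  | 0 => 1
  | t + 1 => (C (1 - q) + C q * X) ^ 2 * phiStarPoly P q t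
      + C (q ^ 2 * ((aeval P (phiStarPoly P q t) - of fun _ _ => (N : ℝ)⁻¹).trace / N))
        * (1 - X ^ 2)

theorem iterate_phiStar_one_sub {N : ℕ} {P : Matrix (Fin N) (Fin N) ℝ}
    (hProw : ∀ i, ∑ j, P i j = 1) (hPsymm : Pᵀ = P)
    (hPdiag : ∀ k : ℕ, ∀ i j : Fin N, (P ^ k) i i = (P ^ k) j j) (q : ℝ) (t : ℕ) :
    (PhiStar P q)^[t] (1 - of fun _ _ => (N : ℝ)⁻¹)
      = aeval P (phiStarPoly P q t) - of fun _ _ => (N : ℝ)⁻¹ := by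
  induction t with
  | zero => simp [phiStarPoly]
  | succ t ih =>
    set J : Matrix (Fin N) (Fin N) ℝ := of fun _ _ => (N : ℝ)⁻¹
    have hdiag : ∀ i j, (aeval P (phiStarPoly P q t) - J) i i
        = (aeval P (phiStarPoly P q t) - J) j j := fun i j => by
      simp only [Matrix.sub_apply, J, of_apply, diag_aeval_eq_of_diag_pow_eq hPdiag _ i j]
    rw [Function.iterate_succ_apply', ih, phiStar_aeval_sub_const q hProw hPsymm _
      fun i => (diag_eq_trace_div_card hdiag i).trans (by rw [Fintype.card_fin])]
    rfl

theorem stmt18_general (N : ℕ) (P : Matrix (Fin N) (Fin N) ℝ) (hProw : ∀ i, ∑ j, P i j = 1)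
    (hPsymm : Pᵀ = P)
    (hPdiag : ∀ k : ℕ, ∀ i j : Fin N, (P ^ k) i i = (P ^ k) j j)
    (q : ℝ)
    (v : Fin N → ℝ) (lam : ℝ)
    (hvev : P *ᵥ v = lam • v) (hvsum : ∑ i, v i = 0) :
    ∃ mu : ℕ → ℝ, mu 0 = 1 ∧
      (∀ t : ℕ,
        ((PhiStar P q)^[t]
            ((1 : Matrix (Fin N) (Fin N) ℝ) - Matrix.of fun _ _ => (N : ℝ)⁻¹)) *ᵥ v
          = mu t • v) ∧
      (∀ t : ℕ,
        mu (t + 1)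
          = ((1 - q) + q * lam) ^ 2 * mu t
            + q ^ 2 *
                (((PhiStar P q)^[t]
                  ((1 : Matrix (Fin N) (Fin N) ℝ) - Matrix.of fun _ _ => (N : ℝ)⁻¹)).trace / N) *
                (1 - lam ^ 2)) := by
  have hJv : (of fun _ _ => (N : ℝ)⁻¹ : Matrix (Fin N) (Fin N) ℝ) *ᵥ v = 0 := by
    ext i
    simp [mulVec, dotProduct, ← Finset.mul_sum, hvsum]
  refine ⟨fun t => (phiStarPoly P q t).eval lam, by simp [phiStarPoly], fun t => ?_, fun t => ?_⟩
  · rw [iterate_phiStar_one_sub hProw hPsymm hPdiag, sub_mulVec,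
      aeval_mulVec_of_mulVec_eq_smul hvev, hJv, sub_zero]
  · simp [iterate_phiStar_one_sub hProw hPsymm hPdiag, phiStarPoly]

/-- For symmetric stochastic `P` whose powers have constant
diagonals, every eigenvector `v` of `P` with `Pv = λv` and `∑ᵢ vᵢ = 0` is an
eigenvector of `X_t = (Φ*)ᵗ(I−J)`: `X_t v = μ_t v` with `μ₀ = 1` and
`μ_{t+1} = λ_q² μ_t + q² r_t (1 − λ²)`, `λ_q = (1−q) + qλ`, `r_t = Tr(X_t)/N`. -/
theorem stmt18 (N : ℕ) (hN : 1 ≤ N) (P : Matrix (Fin N) (Fin N) ℝ)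
    (hPnonneg : ∀ i j, 0 ≤ P i j) (hProw : ∀ i, ∑ j, P i j = 1)
    (hPsymm : Pᵀ = P)
    (hPdiag : ∀ k : ℕ, ∀ i j : Fin N, (P ^ k) i i = (P ^ k) j j)
    (q : ℝ) (hq0 : 0 ≤ q) (hq1 : q ≤ 1)
    (v : Fin N → ℝ) (hv0 : v ≠ 0) (lam : ℝ)
    (hvev : P *ᵥ v = lam • v) (hvsum : ∑ i, v i = 0) :
    ∃ mu : ℕ → ℝ, mu 0 = 1 ∧
      (∀ t : ℕ,
        ((PhiStar P q)^[t]
            ((1 : Matrix (Fin N) (Fin N) ℝ) - Matrix.of fun _ _ => (N : ℝ)⁻¹)) *ᵥ v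
          = mu t • v) ∧
      (∀ t : ℕ,
        mu (t + 1)
          = ((1 - q) + q * lam) ^ 2 * mu t
            + q ^ 2 *
                (((PhiStar P q)^[t]
                  ((1 : Matrix (Fin N) (Fin N) ℝ) - Matrix.of fun _ _ => (N : ℝ)⁻¹)).trace / N) *
                (1 - lam ^ 2)) :=
  stmt18_general N P hProw hPsymm hPdiag q v lam hvev hvsum
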